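/- arXiv:2210.05212 — 2 statements merged into one kernel-verified Lean document; each statement's English description precedes it below -/
import Mathlib

section
/- Let t ≥ 2 be an integer and let Σ be a real symmetric positive-definite t × t matrix with Σ_{jj} = 1 for every j and |Σ_{jj'}| ≤ 1/t⁴ for every pair j ≠ j'. Let μ be the centered Gaussian measure on ℝ^t with covariance Σ, i.e., the measure with density x ↦ (2π)^{−t/2} (det Σ)^{−1/2} exp(−½ xᵀ Σ⁻¹ x) with respect to Lebesgue measure on ℝ^t. Then μ({x ∈ ℝ^t : there exist indices j < j' with x_j > 0 and x_{j'} < 0}) ≥ (2^t − t − 1)(1 − 1/t) · 2^{−t}. -/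
open MeasureTheory Matrix Finset

/-- The centered Gaussian measure on `ℝ^t` with covariance matrix `M`, given by
its density `(2π)^{-t/2} (det M)^{-1/2} exp(-½ xᵀ M⁻¹ x)` with respect to
Lebesgue measure. -/
noncomputable def gaussMeasure (t : ℕ) (M : Matrix (Fin t) (Fin t) ℝ) :
    Measure (Fin t → ℝ) :=
  volume.withDensity fun x => ENNReal.ofReal
    ((Real.sqrt ((2 * Real.pi) ^ t * M.det))⁻¹ *
      Real.exp (-(1 / 2) * (x ⬝ᵥ (M⁻¹ *ᵥ x))))


private def sgnSet (b : Bool) : Set ℝ := if b then Set.Ioi 0 else Set.Iio 0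

private lemma sgnSet_meas (b : Bool) : MeasurableSet (sgnSet b) := by
  cases b
  · exact measurableSet_Iio
  · exact measurableSet_Ioi

private lemma integral_sgnSet (c : ℝ) (hc : 0 < c) (b : Bool) :
    ∫ x in sgnSet b, (Real.sqrt (2 * Real.pi))⁻¹ * Real.exp (-(1 / (2 * c)) * x ^ 2)
      = Real.sqrt c / 2 := by
  have hpi : (0:ℝ) < 2 * Real.pi := by positivity
  have hs2 : Real.sqrt (2 * Real.pi) ≠ 0 := by positivity
  have key : ∫ x in Set.Ioi (0:ℝ), (Real.sqrt (2 * Real.pi))⁻¹ *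
      Real.exp (-(1 / (2 * c)) * x ^ 2) = Real.sqrt c / 2 := by
    rw [integral_const_mul, integral_gaussian_Ioi]
    have h1 : Real.pi / (1 / (2 * c)) = 2 * Real.pi * c := by field_simp
    rw [h1, Real.sqrt_mul hpi.le]
    field_simp
  cases b
  · show ∫ x in Set.Iio (0:ℝ), _ = _
    have heven : ∀ x : ℝ, (Real.sqrt (2 * Real.pi))⁻¹ * Real.exp (-(1 / (2 * c)) * (-x) ^ 2)
        = (Real.sqrt (2 * Real.pi))⁻¹ * Real.exp (-(1 / (2 * c)) * x ^ 2) := fun x => by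
      ring_nf
    rw [← MeasureTheory.integral_Iic_eq_integral_Iio]
    calc (∫ x in Set.Iic (0:ℝ), (Real.sqrt (2 * Real.pi))⁻¹ * Real.exp (-(1 / (2 * c)) * x ^ 2))
        = ∫ x in Set.Iic (0:ℝ), (Real.sqrt (2 * Real.pi))⁻¹ *
            Real.exp (-(1 / (2 * c)) * (-x) ^ 2) := by
          exact setIntegral_congr_fun measurableSet_Iic fun x _ => (heven x).symm
      _ = ∫ x in Set.Ioi (-(0:ℝ)), (Real.sqrt (2 * Real.pi))⁻¹ *
            Real.exp (-(1 / (2 * c)) * x ^ 2) :=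
          integral_comp_neg_Iic 0
            (fun x => (Real.sqrt (2 * Real.pi))⁻¹ * Real.exp (-(1 / (2 * c)) * x ^ 2))
      _ = Real.sqrt c / 2 := by rw [neg_zero]; exact key
  · exact key

private lemma sqrtPow (x : ℝ) (hx : 0 ≤ x) (n : ℕ) :
    Real.sqrt (x ^ n) = (Real.sqrt x) ^ n := by
  induction n with
  | zero => simp
  | succ k ih => rw [pow_succ, pow_succ, Real.sqrt_mul (by positivity), ih]



private lemma quad_ge (t : ℕ) (ht : 2 ≤ t) (M : Matrix (Fin t) (Fin t) ℝ)
    (hdiag : ∀ j, M j j = 1)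
    (hoff : ∀ j j', j ≠ j' → |M j j'| ≤ 1 / (t : ℝ) ^ 4) (x : Fin t → ℝ) :
    (1 - ((t : ℝ) - 1) / (t : ℝ) ^ 4) * ∑ i, x i ^ 2 ≤ x ⬝ᵥ M *ᵥ x := by
  have ht0 : (0:ℝ) < (t:ℝ) := by positivity
  set S : ℝ := ∑ i, |x i| with hS
  set Q : ℝ := ∑ i, x i ^ 2 with hQdef
  have hQ0 : 0 ≤ Q := Finset.sum_nonneg fun i _ => sq_nonneg _
  have hSQ : S ^ 2 ≤ (t : ℝ) * Q := by
    have := sq_sum_le_card_mul_sum_sq (s := (univ : Finset (Fin t))) (f := fun i => |x i|)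
    simpa [sq_abs, hS, hQdef] using this
  have hsplit : x ⬝ᵥ M *ᵥ x
      = ∑ i, x i * (M i i * x i) + ∑ i, ∑ j ∈ univ.erase i, x i * (M i j * x j) := by
    rw [← Finset.sum_add_distrib]
    simp only [dotProduct, mulVec, Finset.mul_sum]
    refine Finset.sum_congr rfl fun i _ => ?_
    exact (Finset.add_sum_erase _ (fun j => x i * (M i j * x j)) (Finset.mem_univ i)).symm
  have hdiagsum : ∑ i, x i * (M i i * x i) = Q := by
    simp [hdiag, hQdef, sq]
  have hoffabs : ∑ i, ∑ j ∈ univ.erase i, |x i| * |x j| = S ^ 2 - Q := by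
    have h1 : ∀ i : Fin t, ∑ j ∈ univ.erase i, |x i| * |x j| = |x i| * S - x i ^ 2 := by
      intro i
      rw [← Finset.mul_sum, Finset.sum_erase_eq_sub (Finset.mem_univ i), mul_sub, ← hS,
        ← sq_abs (x i), sq]
    rw [Finset.sum_congr rfl fun i _ => h1 i, Finset.sum_sub_distrib, ← Finset.sum_mul, ← hS, sq,
      hQdef]
  have hterm : ∀ i : Fin t, ∀ j ∈ univ.erase i,
      -(1 / (t:ℝ)^4 * (|x i| * |x j|)) ≤ x i * (M i j * x j) := by
    intro i j hj
    have hij : i ≠ j := (Finset.ne_of_mem_erase hj).symm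
    have habs : |x i * (M i j * x j)| ≤ 1 / (t:ℝ)^4 * (|x i| * |x j|) := by
      rw [abs_mul, abs_mul]
      have h1 : |M i j| * |x j| ≤ 1 / (t:ℝ)^4 * |x j| :=
        mul_le_mul_of_nonneg_right (hoff i j hij) (abs_nonneg _)
      calc |x i| * (|M i j| * |x j|) ≤ |x i| * (1 / (t:ℝ)^4 * |x j|) :=
            mul_le_mul_of_nonneg_left h1 (abs_nonneg _)
        _ = 1 / (t:ℝ)^4 * (|x i| * |x j|) := by ring
    linarith [neg_abs_le (x i * (M i j * x j))]
  have hoffsum : -(1 / (t:ℝ)^4 * (S ^ 2 - Q)) ≤ ∑ i, ∑ j ∈ univ.erase i, x i * (M i j * x j) := by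
    calc -(1 / (t:ℝ)^4 * (S ^ 2 - Q))
        = ∑ i, ∑ j ∈ univ.erase i, -(1 / (t:ℝ)^4 * (|x i| * |x j|)) := by
          rw [← hoffabs, Finset.mul_sum, ← Finset.sum_neg_distrib]
          exact Finset.sum_congr rfl fun i _ => by
            rw [Finset.mul_sum, ← Finset.sum_neg_distrib]
      _ ≤ _ := Finset.sum_le_sum fun i _ => Finset.sum_le_sum fun j hj => hterm i j hj
  rw [hsplit, hdiagsum]
  have h4 : (0:ℝ) < (t:ℝ)^4 := by positivity
  have hstep : S ^ 2 - Q ≤ ((t:ℝ) - 1) * Q := by nlinarith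
  have key : 1 / (t:ℝ)^4 * (S ^ 2 - Q) ≤ ((t:ℝ) - 1) / (t:ℝ)^4 * Q := by
    calc 1 / (t:ℝ)^4 * (S ^ 2 - Q) ≤ 1 / (t:ℝ)^4 * (((t:ℝ) - 1) * Q) :=
          mul_le_mul_of_nonneg_left hstep (by positivity)
      _ = ((t:ℝ) - 1) / (t:ℝ)^4 * Q := by ring
  linarith [hoffsum, key]

private lemma invquad_le (t : ℕ) (M : Matrix (Fin t) (Fin t) ℝ) (hM : M.PosDef)
    (c : ℝ) (hc : 0 < c) (hq : ∀ y : Fin t → ℝ, c * ∑ i, y i ^ 2 ≤ y ⬝ᵥ M *ᵥ y)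
    (x : Fin t → ℝ) : x ⬝ᵥ M⁻¹ *ᵥ x ≤ (∑ i, x i ^ 2) / c := by
  have hdet : IsUnit M.det := isUnit_iff_ne_zero.mpr hM.det_pos.ne'
  set y : Fin t → ℝ := M⁻¹ *ᵥ x with hy
  have hxy : M *ᵥ y = x := by
    rw [hy, mulVec_mulVec, Matrix.mul_nonsing_inv _ hdet, one_mulVec]
  have hq' : c * ∑ i, y i ^ 2 ≤ x ⬝ᵥ y := by
    rw [← hxy]
    rw [dotProduct_comm]
    exact hq y
  have hY0 : (0:ℝ) ≤ ∑ i, y i ^ 2 := Finset.sum_nonneg fun i _ => sq_nonneg _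
  have hX0 : (0:ℝ) ≤ ∑ i, x i ^ 2 := Finset.sum_nonneg fun i _ => sq_nonneg _
  have hq0 : 0 ≤ x ⬝ᵥ y := le_trans (by positivity) hq'
  have hCS : (x ⬝ᵥ y) ^ 2 ≤ (∑ i, x i ^ 2) * ∑ i, y i ^ 2 :=
    Finset.sum_mul_sq_le_sq_mul_sq univ x y
  rw [le_div_iff₀ hc]
  rcases hq0.eq_or_lt with h0 | hqpos
  · rw [← h0, zero_mul]; exact hX0
  · have h1 : c * (x ⬝ᵥ y) ^ 2 ≤ (∑ i, x i ^ 2) * (c * ∑ i, y i ^ 2) := by nlinarith [hCS]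
    have h2 : (∑ i, x i ^ 2) * (c * ∑ i, y i ^ 2) ≤ (∑ i, x i ^ 2) * (x ⬝ᵥ y) :=
      mul_le_mul_of_nonneg_left hq' hX0
    refine le_of_mul_le_mul_right ?_ hqpos
    calc (x ⬝ᵥ y * c) * (x ⬝ᵥ y) = c * (x ⬝ᵥ y) ^ 2 := by ring
      _ ≤ (∑ i, x i ^ 2) * (x ⬝ᵥ y) := h1.trans h2

private lemma det_le_one (t : ℕ) (ht : 1 ≤ t) (M : Matrix (Fin t) (Fin t) ℝ)
    (hM : M.PosDef) (hdiag : ∀ j, M j j = 1) : M.det ≤ 1 := by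
  have hH := hM.1
  set lam := hH.eigenvalues with hlam
  have hpos : ∀ i, 0 < lam i := hM.eigenvalues_pos
  have hdet : M.det = ∏ i, lam i := by
    have := hH.det_eq_prod_eigenvalues
    simpa using this
  have htr : ∑ i, lam i = (t : ℝ) := by
    have h1 : Matrix.trace M = ∑ i, lam i := by
      conv_lhs => rw [hH.spectral_theorem]
      rw [Unitary.conjStarAlgAut_apply, Matrix.trace_mul_cycle]
      rw [show (star (hH.eigenvectorUnitary : Matrix (Fin t) (Fin t) ℝ)) *
          (hH.eigenvectorUnitary : Matrix (Fin t) (Fin t) ℝ) = 1 from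
          Matrix.UnitaryGroup.star_mul_self _]
      simp [Matrix.trace_diagonal, hlam]
    have h2 : Matrix.trace M = (t : ℝ) := by
      simp [Matrix.trace, Matrix.diag, hdiag]
    rw [← h1, h2]
  have ht0 : (0:ℝ) < t := by exact_mod_cast Nat.pos_of_ne_zero (by omega)
  have hAM : ∏ i, lam i ^ ((t:ℝ)⁻¹) ≤ 1 := by
    have := Real.geom_mean_le_arith_mean_weighted univ (fun _ => (t:ℝ)⁻¹) lam
      (fun i _ => by positivity) (by simp [Finset.card_univ]; field_simp)
      (fun i _ => (hpos i).le)
    rwa [← Finset.mul_sum, htr, inv_mul_cancel₀ ht0.ne'] at this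
  have hpow : (∏ i, lam i ^ ((t:ℝ)⁻¹)) ^ t = ∏ i, lam i := by
    rw [← Finset.prod_pow]
    refine Finset.prod_congr rfl fun i _ => ?_
    rw [← Real.rpow_natCast (lam i ^ ((t:ℝ)⁻¹)) t, ← Real.rpow_mul (hpos i).le,
      inv_mul_cancel₀ ht0.ne', Real.rpow_one]
  have h0 : 0 ≤ ∏ i, lam i ^ ((t:ℝ)⁻¹) :=
    Finset.prod_nonneg fun i _ => Real.rpow_nonneg (hpos i).le _
  calc M.det = (∏ i, lam i ^ ((t:ℝ)⁻¹)) ^ t := by rw [hpow, hdet]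
    _ ≤ 1 := pow_le_one₀ h0 hAM

private lemma orth_measure (t : ℕ) (M : Matrix (Fin t) (Fin t) ℝ)
    (hdet0 : 0 < M.det) (hdet1 : M.det ≤ 1) (c : ℝ) (hc : 0 < c)
    (hquad : ∀ x : Fin t → ℝ, x ⬝ᵥ M⁻¹ *ᵥ x ≤ (∑ i, x i ^ 2) / c)
    (ε : Fin t → Bool) :
    ENNReal.ofReal ((Real.sqrt c / 2) ^ t) ≤
      gaussMeasure t M (Set.pi Set.univ fun i => sgnSet (ε i)) := by
  classical
  set O : Set (Fin t → ℝ) := Set.pi Set.univ fun i => sgnSet (ε i) with hO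
  have hOmeas : MeasurableSet O := MeasurableSet.univ_pi fun i => sgnSet_meas _
  set h : ℝ → ℝ := fun s => (Real.sqrt (2 * Real.pi))⁻¹ * Real.exp (-(1 / (2 * c)) * s ^ 2)
    with hh
  have hh0 : ∀ s, 0 ≤ h s := fun s => by
    apply mul_nonneg (by positivity) (Real.exp_nonneg _)
  have hhint : Integrable h volume :=
    (integrable_exp_neg_mul_sq (by positivity : (0:ℝ) < 1 / (2 * c))).const_mul _
  have hgint : Integrable (fun x : Fin t → ℝ => ∏ i, h (x i)) volume :=
    Integrable.fintype_prod (f := fun _ : Fin t => h) fun _ => hhint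
  -- the indicator identity
  have hind : (O.indicator fun x => ∏ i, h (x i))
      = fun x => ∏ i, (sgnSet (ε i)).indicator h (x i) := by
    funext x
    by_cases hx : x ∈ O
    · rw [Set.indicator_of_mem hx]
      exact Finset.prod_congr rfl fun i _ =>
        (Set.indicator_of_mem ((Set.mem_univ_pi.mp hx) i) h).symm
    · rw [Set.indicator_of_notMem hx]
      have : ¬ ∀ i, x i ∈ sgnSet (ε i) := by simpa [hO, Set.mem_univ_pi] using hx
      push_neg at this
      obtain ⟨i, hi⟩ := this
      exact (Finset.prod_eq_zero (Finset.mem_univ i) (Set.indicator_of_notMem hi h)).symm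
  have hOint : ∫ x in O, ∏ i, h (x i) = (Real.sqrt c / 2) ^ t := by
    rw [← integral_indicator hOmeas, hind,
      integral_fintype_prod_volume_eq_prod (𝕜 := ℝ) (fun i => (sgnSet (ε i)).indicator h)]
    have : ∀ i : Fin t, ∫ x : ℝ, (sgnSet (ε i)).indicator h x = Real.sqrt c / 2 := fun i => by
      rw [integral_indicator (sgnSet_meas _)]
      exact integral_sgnSet c hc (ε i)
    rw [Finset.prod_congr rfl fun i _ => this i, Finset.prod_const, Finset.card_univ,
      Fintype.card_fin]
  -- pointwise comparison with the Gaussian density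
  have hpt : ∀ x : Fin t → ℝ, ∏ i, h (x i) ≤
      (Real.sqrt ((2 * Real.pi) ^ t * M.det))⁻¹ *
        Real.exp (-(1 / 2) * (x ⬝ᵥ (M⁻¹ *ᵥ x))) := by
    intro x
    have hprod : ∏ i, h (x i)
        = ((Real.sqrt (2 * Real.pi))⁻¹) ^ t * Real.exp (∑ i, -(1 / (2 * c)) * (x i) ^ 2) := by
      rw [Real.exp_sum, Finset.prod_mul_distrib, Finset.prod_const, Finset.card_univ,
        Fintype.card_fin]
    have hconst : ((Real.sqrt (2 * Real.pi))⁻¹) ^ t ≤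
        (Real.sqrt ((2 * Real.pi) ^ t * M.det))⁻¹ := by
      rw [inv_pow, ← sqrtPow _ (by positivity)]
      apply inv_anti₀
      · exact Real.sqrt_pos.mpr (by positivity)
      · rw [Real.sqrt_mul (by positivity)]
        nth_rewrite 2 [show Real.sqrt ((2 * Real.pi) ^ t)
          = Real.sqrt ((2 * Real.pi) ^ t) * 1 from (mul_one _).symm]
        exact mul_le_mul_of_nonneg_left
          (Real.sqrt_le_one.mpr hdet1) (Real.sqrt_nonneg _)
    have hexp : Real.exp (∑ i, -(1 / (2 * c)) * (x i) ^ 2)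
        ≤ Real.exp (-(1 / 2) * (x ⬝ᵥ (M⁻¹ *ᵥ x))) := by
      apply Real.exp_le_exp.mpr
      have h1 : ∑ i, -(1 / (2 * c)) * (x i) ^ 2 = -(1 / (2 * c)) * ∑ i, (x i) ^ 2 := by
        rw [Finset.mul_sum]
      rw [h1]
      have h2 : (0:ℝ) < 2 * c := by positivity
      have h3 : (x ⬝ᵥ M⁻¹ *ᵥ x) * c ≤ ∑ i, (x i) ^ 2 := (le_div_iff₀ hc).mp (hquad x)
      rw [neg_mul, neg_mul, neg_le_neg_iff]
      refine le_of_mul_le_mul_right ?_ h2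
      calc 1 / 2 * (x ⬝ᵥ M⁻¹ *ᵥ x) * (2 * c) = (x ⬝ᵥ M⁻¹ *ᵥ x) * c := by ring
        _ ≤ ∑ i, (x i) ^ 2 := h3
        _ = 1 / (2 * c) * (∑ i, (x i) ^ 2) * (2 * c) := by field_simp
    rw [hprod]
    exact mul_le_mul hconst hexp (Real.exp_nonneg _) (by positivity)
  rw [gaussMeasure, withDensity_apply _ hOmeas]
  calc ENNReal.ofReal ((Real.sqrt c / 2) ^ t)
      = ENNReal.ofReal (∫ x in O, ∏ i, h (x i)) := by rw [hOint]
    _ = ∫⁻ x in O, ENNReal.ofReal (∏ i, h (x i)) :=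
        ofReal_integral_eq_lintegral_ofReal (hgint.restrict)
          (Filter.Eventually.of_forall fun x => Finset.prod_nonneg fun i _ => hh0 _)
    _ ≤ ∫⁻ x in O, ENNReal.ofReal ((Real.sqrt ((2 * Real.pi) ^ t * M.det))⁻¹ *
          Real.exp (-(1 / 2) * (x ⬝ᵥ (M⁻¹ *ᵥ x)))) :=
        lintegral_mono fun x => ENNReal.ofReal_le_ofReal (hpt x)

private lemma good_count (t : ℕ) :
    2 ^ t - (t + 1) ≤ (Finset.univ.filter fun ε : Fin t → Bool =>
      ∃ j j' : Fin t, j < j' ∧ ε j = true ∧ ε j' = false).card := by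
  classical
  have final : ∀ a b : ℕ, a + b = 2 ^ t → b ≤ t + 1 → 2 ^ t - (t + 1) ≤ a := by
    intro a b h1 h2; omega
  have hcard : ∀ i : Fin t, ∀ a b : ℕ, t - (i:ℕ) ≤ a → b ≤ t - 1 - (i:ℕ) → b < a := by
    intro i a b h1 h2
    have hit : (i : ℕ) < t := i.isLt
    omega
  set P : (Fin t → Bool) → Prop := fun ε => ∃ j j' : Fin t, j < j' ∧ ε j = true ∧ ε j' = false
    with hP
  have hmono : ∀ ε : Fin t → Bool, ¬ P ε → ∀ j j' : Fin t, j < j' → ε j = true → ε j' = true := by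
    intro ε hε j j' hlt hj
    by_contra hj'
    exact hε ⟨j, j', hlt, hj, by simpa using hj'⟩
  have hbad : (Finset.univ.filter fun ε => ¬ P ε).card ≤ t + 1 := by
    have := Finset.card_le_card_of_injOn
      (f := fun ε : Fin t → Bool => (Finset.univ.filter fun i => ε i = true).card)
      (s := Finset.univ.filter fun ε => ¬ P ε) (t := Finset.range (t + 1)) ?_ ?_
    · simpa using this
    · intro ε _
      simp only [Finset.mem_coe, Finset.mem_range, Nat.lt_succ_iff]
      calc (Finset.univ.filter fun i => ε i = true).card ≤ (Finset.univ : Finset (Fin t)).card :=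
            Finset.card_filter_le _ _
        _ = t := by simp
    · intro ε₁ h₁ ε₂ h₂ heq
      simp only [Finset.coe_filter, Set.mem_setOf_eq, Finset.mem_univ, true_and] at h₁ h₂
      by_contra hne
      obtain ⟨i, hi⟩ := Function.ne_iff.mp hne
      have key : ∀ η₁ η₂ : Fin t → Bool, ¬ P η₁ → ¬ P η₂ → η₁ i = true → η₂ i = false →
          (Finset.univ.filter fun j => η₂ j = true).card <
          (Finset.univ.filter fun j => η₁ j = true).card := by
        intro η₁ η₂ hη₁ hη₂ hi1 hi2
        have hsub1 : Finset.Ici i ⊆ Finset.univ.filter fun j => η₁ j = true := by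
          intro j hj
          rw [Finset.mem_Ici] at hj
          rcases eq_or_lt_of_le hj with rfl | hlt
          · simp [hi1]
          · simp [hmono η₁ hη₁ i j hlt hi1]
        have hsub2 : (Finset.univ.filter fun j => η₂ j = true) ⊆ Finset.Ioi i := by
          intro j hj
          rw [Finset.mem_filter] at hj
          rw [Finset.mem_Ioi]
          by_contra hle
          push_neg at hle
          rcases eq_or_lt_of_le hle with rfl | hlt
          · rw [hj.2] at hi2; exact Bool.noConfusion hi2
          · have := hmono η₂ hη₂ j i hlt hj.2
            rw [this] at hi2; exact Bool.noConfusion hi2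
        have h1 := Finset.card_le_card hsub1
        have h2 := Finset.card_le_card hsub2
        rw [Fin.card_Ici] at h1
        rw [Fin.card_Ioi] at h2
        exact hcard i _ _ h1 h2
      cases hb1 : ε₁ i <;> cases hb2 : ε₂ i
      · rw [hb1, hb2] at hi; exact hi rfl
      · exact absurd heq (key ε₂ ε₁ h₂ h₁ hb2 hb1).ne
      · exact absurd heq (key ε₁ ε₂ h₁ h₂ hb1 hb2).ne'
      · rw [hb1, hb2] at hi; exact hi rfl
  have htot : (Finset.univ.filter P).card + (Finset.univ.filter fun ε => ¬ P ε).card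
      = 2 ^ t := by
    rw [Finset.card_filter_add_card_filter_not, Finset.card_univ, Fintype.card_fun]
    simp
  have : (Finset.univ.filter fun ε : Fin t → Bool =>
      ∃ j j' : Fin t, j < j' ∧ ε j = true ∧ ε j' = false).card = (Finset.univ.filter P).card := by
    rfl
  rw [this]
  exact final _ _ htot hbad

/-- **Good sign patterns are likely.** For a near-identity Gaussian on `ℝ^t`, the
probability that some positive coordinate precedes a negative coordinate is at
least `(2^t - t - 1)(1 - 1/t) · 2^{-t}`. -/
theorem gaussian_good_sign_lower_bound (t : ℕ) (ht : 2 ≤ t)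
    (M : Matrix (Fin t) (Fin t) ℝ) (hM : M.PosDef)
    (hdiag : ∀ j, M j j = 1)
    (hoff : ∀ j j', j ≠ j' → |M j j'| ≤ 1 / (t : ℝ) ^ 4) :
    ENNReal.ofReal ((2 ^ t - t - 1) * (1 - 1 / (t : ℝ)) / 2 ^ t) ≤
      gaussMeasure t M
        {x | ∃ j j' : Fin t, j < j' ∧ 0 < x j ∧ x j' < 0} := by
  classical
  have ht' : (2:ℝ) ≤ (t:ℝ) := by exact_mod_cast ht
  have ht0 : (0:ℝ) < (t:ℝ) := by linarith
  set c : ℝ := 1 - ((t:ℝ) - 1) / (t:ℝ) ^ 4 with hcdef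
  have hrlt : ((t:ℝ) - 1) / (t:ℝ) ^ 4 < 1 := by
    rw [div_lt_one (by positivity)]
    nlinarith [mul_nonneg (by linarith : (0:ℝ) ≤ (t:ℝ) - 2) ht0.le,
      mul_nonneg (mul_nonneg (by linarith : (0:ℝ) ≤ (t:ℝ) - 2) ht0.le) (sq_nonneg (t:ℝ)),
      sq_nonneg (t:ℝ)]
  have hc : 0 < c := by rw [hcdef]; linarith
  -- the inverse quadratic form bound
  have hquadM : ∀ y : Fin t → ℝ, c * ∑ i, y i ^ 2 ≤ y ⬝ᵥ M *ᵥ y := fun y =>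
    quad_ge t ht M hdiag hoff y
  have hinv : ∀ x : Fin t → ℝ, x ⬝ᵥ M⁻¹ *ᵥ x ≤ (∑ i, x i ^ 2) / c :=
    invquad_le t M hM c hc hquadM
  have hdet1 : M.det ≤ 1 := det_le_one t (by omega) M hM hdiag
  have horth : ∀ ε : Fin t → Bool,
      ENNReal.ofReal ((Real.sqrt c / 2) ^ t) ≤
        gaussMeasure t M (Set.pi Set.univ fun i => sgnSet (ε i)) :=
    orth_measure t M hM.det_pos hdet1 c hc hinv
  -- the per-orthant bound by the target constant
  have hinv_t : (0:ℝ) ≤ 1 - 1 / (t:ℝ) := by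
    have : 1 / (t:ℝ) ≤ 1 / 2 := by
      apply one_div_le_one_div_of_le <;> linarith
    linarith
  have hβ : (1 - 1 / (t:ℝ)) / 2 ^ t ≤ (Real.sqrt c / 2) ^ t := by
    have hmain : (1 - 1 / (t:ℝ)) ≤ (Real.sqrt c) ^ t := by
      rw [← sqrtPow c hc.le t]
      have hct : (1 - 1 / (t:ℝ)) ^ 2 ≤ c ^ t := by
        have hr2 : -2 ≤ -(((t:ℝ) - 1) / (t:ℝ) ^ 4) := by nlinarith
        have hb := one_add_mul_le_pow hr2 t
        have hb' : 1 - (t:ℝ) * (((t:ℝ) - 1) / (t:ℝ) ^ 4) ≤ c ^ t := by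
          rw [hcdef]
          calc 1 - (t:ℝ) * (((t:ℝ) - 1) / (t:ℝ) ^ 4)
              = 1 + (t:ℝ) * (-(((t:ℝ) - 1) / (t:ℝ) ^ 4)) := by ring
            _ ≤ (1 + -(((t:ℝ) - 1) / (t:ℝ) ^ 4)) ^ t := hb
            _ = (1 - ((t:ℝ) - 1) / (t:ℝ) ^ 4) ^ t := by ring_nf
        refine le_trans ?_ hb'
        have e1 : (t:ℝ) * (((t:ℝ) - 1) / (t:ℝ) ^ 4) = ((t:ℝ) - 1) / (t:ℝ) ^ 3 := by
          field_simp
        have e2 : (1 : ℝ) - 1 / (t:ℝ) = ((t:ℝ) - 1) / (t:ℝ) := by field_simp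
        rw [e1, e2, div_pow]
        rw [show (1:ℝ) - ((t:ℝ) - 1) / (t:ℝ) ^ 3 = ((t:ℝ) ^ 3 - ((t:ℝ) - 1)) / (t:ℝ) ^ 3 by
          field_simp]
        rw [div_le_div_iff₀ (by positivity) (by positivity)]
        nlinarith
      calc (1 : ℝ) - 1 / (t:ℝ) = Real.sqrt ((1 - 1 / (t:ℝ)) ^ 2) := (Real.sqrt_sq hinv_t).symm
        _ ≤ Real.sqrt (c ^ t) := Real.sqrt_le_sqrt hct
    calc (1 - 1 / (t:ℝ)) / 2 ^ t ≤ (Real.sqrt c) ^ t / 2 ^ t := by gcongr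
      _ = (Real.sqrt c / 2) ^ t := (div_pow _ _ _).symm
  have horth' : ∀ ε : Fin t → Bool,
      ENNReal.ofReal ((1 - 1 / (t:ℝ)) / 2 ^ t) ≤
        gaussMeasure t M (Set.pi Set.univ fun i => sgnSet (ε i)) := fun ε =>
    le_trans (ENNReal.ofReal_le_ofReal hβ) (horth ε)
  -- sum over good sign patterns
  set G : Finset (Fin t → Bool) := Finset.univ.filter fun ε : Fin t → Bool =>
    ∃ j j' : Fin t, j < j' ∧ ε j = true ∧ ε j' = false with hG
  have hGcard : 2 ^ t - (t + 1) ≤ G.card := good_count t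
  have hmeas : ∀ ε ∈ G, MeasurableSet (Set.pi Set.univ fun i => sgnSet (ε i)) := fun ε _ =>
    MeasurableSet.univ_pi fun i => sgnSet_meas _
  have hdisj : (G : Set (Fin t → Bool)).PairwiseDisjoint
      (fun ε => Set.pi Set.univ fun i => sgnSet (ε i)) := by
    intro ε₁ _ ε₂ _ hne
    obtain ⟨i, hi⟩ := Function.ne_iff.mp hne
    apply Set.disjoint_left.mpr
    intro x hx1 hx2
    have h1 := Set.mem_univ_pi.mp hx1 i
    have h2 := Set.mem_univ_pi.mp hx2 i
    cases hb1 : ε₁ i <;> cases hb2 : ε₂ i <;> rw [hb1] at h1 <;> rw [hb2] at h2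
    · exact hi (hb1.trans hb2.symm)
    · simp only [sgnSet, if_true, if_false, Bool.false_eq_true, Set.mem_Ioi, Set.mem_Iio] at h1 h2
      exact absurd (h1.trans h2) (by simp)
    · simp only [sgnSet, if_true, if_false, Bool.false_eq_true, Set.mem_Ioi, Set.mem_Iio] at h1 h2
      exact absurd (h2.trans h1) (by simp)
    · exact hi (hb1.trans hb2.symm)
  have hsub : (⋃ ε ∈ G, Set.pi Set.univ fun i => sgnSet (ε i)) ⊆
      {x : Fin t → ℝ | ∃ j j' : Fin t, j < j' ∧ 0 < x j ∧ x j' < 0} := by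
    intro x hx
    simp only [Set.mem_iUnion] at hx
    obtain ⟨ε, hεG, hxO⟩ := hx
    rw [hG, Finset.mem_filter] at hεG
    obtain ⟨_, j, j', hlt, hj, hj'⟩ := hεG
    have h1 := Set.mem_univ_pi.mp hxO j
    have h2 := Set.mem_univ_pi.mp hxO j'
    rw [hj] at h1
    rw [hj'] at h2
    simp only [sgnSet, if_true, if_false, Bool.false_eq_true, Set.mem_Ioi, Set.mem_Iio] at h1 h2
    exact ⟨j, j', hlt, h1, h2⟩
  -- put everything together
  have hconst : ENNReal.ofReal ((2 ^ t - (t:ℝ) - 1) * (1 - 1 / (t:ℝ)) / 2 ^ t) ≤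
      G.card • ENNReal.ofReal ((1 - 1 / (t:ℝ)) / 2 ^ t) := by
    have h21 : t + 1 ≤ 2 ^ t := by
      have := Nat.lt_two_pow_self (n := t)
      omega
    have hN : ((2 ^ t - (t + 1) : ℕ) : ℝ) = 2 ^ t - (t:ℝ) - 1 := by
      rw [Nat.cast_sub h21]
      push_cast
      ring
    have harg : (2 ^ t - (t:ℝ) - 1) * (1 - 1 / (t:ℝ)) / 2 ^ t
        = ((2 ^ t - (t + 1) : ℕ) : ℝ) * ((1 - 1 / (t:ℝ)) / 2 ^ t) := by
      rw [hN]; ring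
    rw [harg, ENNReal.ofReal_mul (Nat.cast_nonneg _), ENNReal.ofReal_natCast, nsmul_eq_mul]
    exact mul_le_mul_left (by exact_mod_cast hGcard) _
  calc ENNReal.ofReal ((2 ^ t - (t:ℝ) - 1) * (1 - 1 / (t:ℝ)) / 2 ^ t)
      ≤ G.card • ENNReal.ofReal ((1 - 1 / (t:ℝ)) / 2 ^ t) := hconst
    _ ≤ ∑ ε ∈ G, gaussMeasure t M (Set.pi Set.univ fun i => sgnSet (ε i)) :=
        Finset.card_nsmul_le_sum G _ _ fun ε _ => horth' ε
    _ = gaussMeasure t M (⋃ ε ∈ G, Set.pi Set.univ fun i => sgnSet (ε i)) :=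
        (measure_biUnion_finset hdisj hmeas).symm
    _ ≤ gaussMeasure t M {x : Fin t → ℝ | ∃ j j' : Fin t, j < j' ∧ 0 < x j ∧ x j' < 0} :=
        measure_mono hsub
end

section
/- There exists K₀ ∈ ℕ such that for every k ≥ K₀ and all integers i < ℓ with k^{3/4} ≤ i and ℓ ≤ k the following holds: if b_1, …, b_k are i.i.d. Uniform[0,1] and b_{(1)} ≤ b_{(2)} ≤ ⋯ ≤ b_{(k)} denotes their nondecreasing rearrangement (order statistics), then with probability at least 1 − 64/√k one has ∑_{ι=1}^{i−1} (b_{(i)} − b_{(ι)})(b_{(ℓ)} − b_{(ι)}) ≤ 3 i² ℓ/(2k²). -/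
open MeasureTheory Filter

/-- The joint law of `k` i.i.d. `Uniform[0,1]` random variables. -/
noncomputable def uniformBiases (k : ℕ) : Measure (Fin k → ℝ) :=
  Measure.pi fun _ => volume.restrict (Set.Icc (0:ℝ) 1)

/-- The nondecreasing rearrangement (order statistics) of `b`: `sortedTuple b j`
is the `(j+1)`-th smallest of the `b`'s. -/
noncomputable def sortedTuple {k : ℕ} (b : Fin k → ℝ) : Fin k → ℝ :=
  b ∘ Tuple.sort b

open Function

noncomputable abbrev unif : Measure ℝ := volume.restrict (Set.Icc (0:ℝ) 1)

instance : IsProbabilityMeasure unif := ⟨by simp⟩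

instance (k : ℕ) : IsProbabilityMeasure (uniformBiases k) := by
  unfold uniformBiases; infer_instance

lemma uniformBiases_eval_preimage {k : ℕ} (j : Fin k) (s : Set ℝ) :
    uniformBiases k (eval j ⁻¹' s) = unif s := by
  classical
  rw [Set.eval_preimage, uniformBiases, Measure.pi_pi]
  rw [← Finset.mul_prod_erase Finset.univ _ (Finset.mem_univ j)]
  simp only [Function.update_self]
  rw [Finset.prod_eq_one, mul_one]
  intro r hr
  rw [Function.update_of_ne (Finset.mem_erase.mp hr).1]
  exact measure_univ

lemma uniformBiases_eval_preimage_inter {k : ℕ} {j m : Fin k} (hjm : j ≠ m) (s u : Set ℝ) :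
    uniformBiases k (eval j ⁻¹' s ∩ eval m ⁻¹' u) = unif s * unif u := by
  classical
  have hset : eval j ⁻¹' s ∩ eval m ⁻¹' u
      = Set.pi Set.univ (fun r => if r = j then s else if r = m then u else Set.univ) := by
    ext b
    simp only [Set.mem_inter_iff, Set.mem_preimage, Set.mem_univ_pi, eval]
    constructor
    · rintro ⟨h1, h2⟩ r
      split_ifs with hr hr'
      · subst hr; exact h1
      · subst hr'; exact h2
      · trivial
    · intro h
      refine ⟨?_, ?_⟩
      · have := h j; simpa using this
      · have := h m; simp only [if_neg (Ne.symm hjm), if_pos rfl] at this; exact this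
  rw [hset, uniformBiases, Measure.pi_pi]
  rw [← Finset.mul_prod_erase Finset.univ _ (Finset.mem_univ j), if_pos rfl]
  rw [← Finset.mul_prod_erase _ _ (Finset.mem_erase.mpr ⟨Ne.symm hjm, Finset.mem_univ m⟩)]
  rw [if_neg (Ne.symm hjm), if_pos rfl]
  rw [Finset.prod_eq_one, mul_one]
  intro r hr
  simp only [Finset.mem_erase] at hr
  rw [if_neg hr.2.1, if_neg hr.1]
  exact measure_univ

open ProbabilityTheory in
lemma indepFun_eval {k : ℕ} {j m : Fin k} (hjm : j ≠ m) :
    IndepFun (eval j) (eval m) (uniformBiases k) := by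
  rw [indepFun_iff_measure_inter_preimage_eq_mul]
  intro s u _ _
  rw [uniformBiases_eval_preimage_inter hjm, uniformBiases_eval_preimage,
    uniformBiases_eval_preimage]

lemma unif_Iic {t : ℝ} (ht0 : 0 ≤ t) (ht1 : t ≤ 1) :
    unif (Set.Iic t) = ENNReal.ofReal t := by
  rw [Measure.restrict_apply measurableSet_Iic]
  have : Set.Iic t ∩ Set.Icc 0 1 = Set.Icc 0 t := by
    ext x
    simp only [Set.mem_inter_iff, Set.mem_Iic, Set.mem_Icc]
    constructor
    · rintro ⟨h1, h2, _⟩; exact ⟨h2, h1⟩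
    · rintro ⟨h1, h2⟩; exact ⟨h2, h1, h2.trans ht1⟩
  rw [this, Real.volume_Icc, sub_zero]

open ProbabilityTheory in
lemma count_le_bound {k : ℕ} (t : ℝ) (ht0 : 0 ≤ t) (ht1 : t ≤ 1) (n : ℕ)
    (hn : (n : ℝ) < k * t) :
    uniformBiases k {b | ((Finset.univ.filter fun j => b j ≤ t).card : ℝ) ≤ n}
      ≤ ENNReal.ofReal (k * t * (1 - t) / (k * t - n) ^ 2) := by
  classical
  set μ := uniformBiases k
  set g : ℝ → ℝ := (Set.Iic t).indicator (fun _ => 1) with hg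
  set X : Fin k → (Fin k → ℝ) → ℝ := fun j => g ∘ eval j with hX
  have hXind : ∀ j : Fin k, X j = (eval j ⁻¹' Set.Iic t).indicator (fun _ => (1:ℝ)) := by
    intro j
    funext b
    by_cases h : b j ≤ t <;>
      simp [hX, hg, Set.indicator_apply, Set.mem_preimage, eval, h]
  have hmeas : ∀ j : Fin k, MeasurableSet (eval j ⁻¹' Set.Iic t : Set (Fin k → ℝ)) :=
    fun j => (measurable_pi_apply j) measurableSet_Iic
  have hX2 : ∀ j : Fin k, MemLp (X j) 2 μ := by
    intro j
    rw [hXind j]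
    exact memLp_indicator_const 2 (hmeas j) 1 (Or.inr (measure_ne_top _ _))
  have hEX : ∀ j : Fin k, μ[X j] = t := by
    intro j
    rw [hXind j, integral_indicator_const (1:ℝ) (hmeas j)]
    rw [measureReal_def, uniformBiases_eval_preimage, unif_Iic ht0 ht1, smul_eq_mul, mul_one,
      ENNReal.toReal_ofReal ht0]
  have hXsq : ∀ j : Fin k, (X j) ^ 2 = X j := by
    intro j
    funext b
    rw [hXind j]
    by_cases h : b ∈ eval j ⁻¹' Set.Iic t <;> simp [h]
  have hVar : ∀ j : Fin k, variance (X j) μ = t - t ^ 2 := by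
    intro j
    rw [variance_eq_sub (hX2 j), hXsq j, hEX j]
  set N : (Fin k → ℝ) → ℝ := ∑ j : Fin k, X j with hN
  have hNmem : MemLp N 2 μ := memLp_finset_sum' _ (fun j _ => hX2 j)
  have hEN : μ[N] = k * t := by
    rw [hN]
    simp only [Finset.sum_apply]
    rw [integral_finset_sum _ (fun j _ => (hX2 j).integrable one_le_two)]
    simp [hEX, mul_comm]
  have hVarN : variance N μ = k * (t * (1 - t)) := by
    rw [hN, IndepFun.variance_sum (fun j _ => hX2 j)]
    · simp only [hVar]
      rw [Finset.sum_const, Finset.card_univ, Fintype.card_fin, nsmul_eq_mul]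
      ring
    · intro j _ m _ hjm
      have hgm : Measurable g := Measurable.indicator measurable_const measurableSet_Iic
      exact (indepFun_eval hjm).comp hgm hgm
  have hc : (0:ℝ) < k * t - n := by linarith
  have hsub : {b : Fin k → ℝ | ((Finset.univ.filter fun j => b j ≤ t).card : ℝ) ≤ n}
      ⊆ {b | (k * t - n) ≤ |N b - μ[N]|} := by
    intro b hb
    simp only [Set.mem_setOf_eq] at hb ⊢
    have hNb : N b = ((Finset.univ.filter fun j => b j ≤ t).card : ℝ) := by
      rw [hN, Finset.sum_apply]
      have : ∀ j : Fin k, X j b = if b j ≤ t then (1:ℝ) else 0 := by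
        intro j
        rw [hXind j]
        simp [Set.indicator_apply]
      simp only [this]
      rw [Finset.sum_boole]
    rw [hEN, hNb]
    rw [abs_sub_comm]
    refine le_trans ?_ (le_abs_self _)
    linarith
  calc μ _ ≤ μ {b | (k * t - n) ≤ |N b - μ[N]|} := measure_mono hsub
    _ ≤ ENNReal.ofReal (variance N μ / (k * t - n) ^ 2) :=
        meas_ge_le_variance_div_sq hNmem hc
    _ = ENNReal.ofReal (k * t * (1 - t) / (k * t - n) ^ 2) := by
        rw [hVarN]; ring_nf

lemma sortedTuple_le_iff {k : ℕ} (b : Fin k → ℝ) (t : ℝ) (i : Fin k) :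
    sortedTuple b i ≤ t ↔ (i : ℕ) + 1 ≤ (Finset.univ.filter fun j => b j ≤ t).card := by
  classical
  have hcard : (Finset.univ.filter fun j => b j ≤ t).card
      = (Finset.univ.filter fun j => sortedTuple b j ≤ t).card := by
    apply Finset.card_bij' (fun j _ => (Tuple.sort b).symm j) (fun j _ => Tuple.sort b j)
    · intro j hj
      simp only [Finset.mem_filter, Finset.mem_univ, true_and] at hj ⊢
      simpa [sortedTuple] using hj
    · intro j hj
      simp only [Finset.mem_filter, Finset.mem_univ, true_and] at hj ⊢
      simpa [sortedTuple] using hj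
    · intro j _; simp
    · intro j _; simp
  rw [hcard]
  constructor
  · intro h
    have hsub : Finset.Iic i ⊆ Finset.univ.filter fun j => sortedTuple b j ≤ t := by
      intro j hj
      simp only [Finset.mem_Iic] at hj
      simp only [Finset.mem_filter, Finset.mem_univ, true_and]
      exact le_trans (Tuple.monotone_sort b hj) h
    calc (i : ℕ) + 1 = (Finset.Iic i).card := (Fin.card_Iic i).symm
      _ ≤ _ := Finset.card_le_card hsub
  · intro h
    by_contra hlt
    push_neg at hlt
    have hsub : (Finset.univ.filter fun j => sortedTuple b j ≤ t) ⊆ Finset.Iio i := by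
      intro j hj
      simp only [Finset.mem_filter, Finset.mem_univ, true_and] at hj
      simp only [Finset.mem_Iio]
      by_contra hji
      push_neg at hji
      exact absurd (le_trans (Tuple.monotone_sort b hji) hj) (not_le.mpr hlt)
    have := Finset.card_le_card hsub
    rw [Fin.card_Iio] at this
    omega

lemma box_ae {k : ℕ} :
    uniformBiases k {b | ¬ ∀ j, b j ∈ Set.Icc (0:ℝ) 1} = 0 := by
  have hsub : {b : Fin k → ℝ | ¬ ∀ j, b j ∈ Set.Icc (0:ℝ) 1}
      ⊆ ⋃ j : Fin k, eval j ⁻¹' (Set.Icc (0:ℝ) 1)ᶜ := by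
    intro b hb
    simp only [Set.mem_setOf_eq, not_forall] at hb
    obtain ⟨j, hj⟩ := hb
    exact Set.mem_iUnion.mpr ⟨j, hj⟩
  refine measure_mono_null hsub (measure_iUnion_null fun j => ?_)
  rw [uniformBiases_eval_preimage, Measure.restrict_apply measurableSet_Icc.compl]
  simp

lemma sum_pointwise_bound {k : ℕ} {b : Fin k → ℝ} (hbox : ∀ j, b j ∈ Set.Icc (0:ℝ) 1)
    {i ℓ : Fin k} (hil : i < ℓ) {ti tl : ℝ}
    (hi : sortedTuple b i ≤ ti) (hl : sortedTuple b ℓ ≤ tl) (hti : 0 ≤ ti) (htl : 0 ≤ tl) :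
    ∑ ι ∈ Finset.univ.filter (fun ι => ι < i),
        (sortedTuple b i - sortedTuple b ι) * (sortedTuple b ℓ - sortedTuple b ι)
      ≤ ((i : ℕ) : ℝ) * (ti * tl) := by
  classical
  have hfilter : Finset.univ.filter (fun ι => ι < i) = Finset.Iio i := by
    ext ι; simp
  have hterm : ∀ ι ∈ Finset.univ.filter (fun ι => ι < i),
      (sortedTuple b i - sortedTuple b ι) * (sortedTuple b ℓ - sortedTuple b ι) ≤ ti * tl := by
    intro ι hι
    simp only [Finset.mem_filter, Finset.mem_univ, true_and] at hι
    have h0 : (0:ℝ) ≤ sortedTuple b ι := (hbox ((Tuple.sort b) ι)).1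
    have hmi : sortedTuple b ι ≤ sortedTuple b i := Tuple.monotone_sort b hι.le
    have hml : sortedTuple b ι ≤ sortedTuple b ℓ := Tuple.monotone_sort b (hι.trans hil).le
    have h2 : sortedTuple b i - sortedTuple b ι ≤ ti := by linarith
    have h3 : 0 ≤ sortedTuple b ℓ - sortedTuple b ι := by linarith
    have h4 : sortedTuple b ℓ - sortedTuple b ι ≤ tl := by linarith
    exact mul_le_mul h2 h4 h3 hti
  calc ∑ ι ∈ Finset.univ.filter (fun ι => ι < i),
        (sortedTuple b i - sortedTuple b ι) * (sortedTuple b ℓ - sortedTuple b ι)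
      ≤ ∑ _ι ∈ Finset.univ.filter (fun ι => ι < i), ti * tl := Finset.sum_le_sum hterm
    _ = ((i : ℕ) : ℝ) * (ti * tl) := by
        rw [Finset.sum_const, hfilter, Fin.card_Iio, nsmul_eq_mul]

lemma bad_measure {k : ℕ} (hk : 0 < k) (n : Fin k) :
    uniformBiases k {b | ¬ sortedTuple b n ≤ min (6 * (((n:ℕ):ℝ) + 1) / (5 * (k:ℝ))) 1}
      ≤ ENNReal.ofReal (30 / (((n:ℕ):ℝ) + 1)) := by
  have hkR : (0:ℝ) < k := Nat.cast_pos.mpr hk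
  set nR : ℝ := ((n:ℕ):ℝ) with hnRdef
  have hnR : (0:ℝ) < nR + 1 := by positivity
  set t := min (6 * (nR + 1) / (5 * (k:ℝ))) 1 with ht
  have ht0 : 0 ≤ t := le_min (by positivity) zero_le_one
  have ht1 : t ≤ 1 := min_le_right _ _
  have hkt : (k:ℝ) * t = min (6 * (nR + 1) / 5) (k:ℝ) := by
    rw [ht, mul_min_of_nonneg _ _ hkR.le, mul_one]
    congr 1
    field_simp
  have hn : nR < (k:ℝ) * t := by
    rw [hkt, lt_min_iff]
    refine ⟨by linarith, ?_⟩
    rw [hnRdef]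
    exact_mod_cast n.isLt
  have hset : {b : Fin k → ℝ | ¬ sortedTuple b n ≤ t}
      = {b | ((Finset.univ.filter fun j => b j ≤ t).card : ℝ) ≤ ((n:ℕ) : ℕ)} := by
    ext b
    simp only [Set.mem_setOf_eq, sortedTuple_le_iff b t n]
    constructor
    · intro h
      exact Nat.cast_le.mpr (by omega)
    · intro h
      have := Nat.cast_le.mp h
      omega
  rw [hset]
  refine le_trans (count_le_bound t ht0 ht1 (n:ℕ) ?_) (ENNReal.ofReal_le_ofReal ?_)
  · exact_mod_cast hn
  rcases le_or_gt (6 * (nR + 1) / (5 * (k:ℝ))) 1 with hc | hc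
  · have hktv : (k:ℝ) * t = 6 * (nR + 1) / 5 := by
      rw [ht, min_eq_left hc]; field_simp
    have hnum : (k:ℝ) * t * (1 - t) ≤ 6 * (nR + 1) / 5 := by
      nlinarith [mul_nonneg (mul_nonneg hkR.le ht0) ht0]
    have hden : (nR + 1) / 5 ≤ (k:ℝ) * t - nR := by
      rw [hktv]; linarith
    have h1 : ((n:ℕ):ℝ) = nR := rfl
    rw [h1]
    calc (k:ℝ) * t * (1 - t) / ((k:ℝ) * t - nR) ^ 2
        ≤ (6 * (nR + 1) / 5) / (((nR + 1) / 5) ^ 2) := by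
          apply div_le_div₀ (by positivity) hnum (by positivity)
          exact pow_le_pow_left₀ (by positivity) hden 2
      _ = 30 / (nR + 1) := by
          have hne : nR + 1 ≠ 0 := hnR.ne'
          field_simp
          ring
  · have htt : t = 1 := min_eq_right hc.le
    rw [htt]
    simp only [sub_self, mul_zero, zero_div]
    positivity

/-- **Covariance upper bound.** For all large `k` and order-statistic indices
`i < ℓ` (with `1`-based rank `i+1 ≥ k^{3/4}`), with probability at least
`1 - 64/√k` the sum `∑_{ι < i} (b_{(i)} - b_{(ι)})(b_{(ℓ)} - b_{(ι)})` is at most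
`3 (i+1)² (ℓ+1) / (2 k²)`. -/
theorem order_statistic_covariance_upper_bound :
    ∃ K₀ : ℕ, ∀ k : ℕ, K₀ ≤ k → ∀ i ℓ : Fin k, i < ℓ →
      (k : ℝ) ^ ((3 : ℝ) / 4) ≤ (i : ℕ) + 1 →
      ENNReal.ofReal (1 - 64 / Real.sqrt k) ≤
        uniformBiases k
          {b | ∑ ι ∈ Finset.univ.filter (fun ι => ι < i),
              (sortedTuple b i - sortedTuple b ι) *
                (sortedTuple b ℓ - sortedTuple b ι) ≤
            3 * ((i : ℝ) + 1) ^ 2 * ((ℓ : ℝ) + 1) / (2 * (k : ℝ) ^ 2)} := by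
  classical
  refine ⟨1, fun k hk i ℓ hil hik => ?_⟩
  have hk0 : 0 < k := hk
  have hkR : (0:ℝ) < k := Nat.cast_pos.mpr hk0
  have hk1 : (1:ℝ) ≤ k := by exact_mod_cast hk
  set iR : ℝ := ((i:ℕ):ℝ) with hiR
  set lR : ℝ := ((ℓ:ℕ):ℝ) with hlR
  set ti : ℝ := min (6 * (iR + 1) / (5 * (k:ℝ))) 1 with hti
  set tl : ℝ := min (6 * (lR + 1) / (5 * (k:ℝ))) 1 with htl
  have hti0 : 0 ≤ ti := le_min (by positivity) zero_le_one
  have htl0 : 0 ≤ tl := le_min (by positivity) zero_le_one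
  set S : Set (Fin k → ℝ) :=
    {b | ∑ ι ∈ Finset.univ.filter (fun ι => ι < i),
        (sortedTuple b i - sortedTuple b ι) * (sortedTuple b ℓ - sortedTuple b ι) ≤
      3 * ((i : ℝ) + 1) ^ 2 * ((ℓ : ℝ) + 1) / (2 * (k : ℝ) ^ 2)} with hS
  set μ := uniformBiases k with hμ
  -- inclusion of the complement in the union of bad events
  have hsub : Sᶜ ⊆ {b | ¬ ∀ j, b j ∈ Set.Icc (0:ℝ) 1}
      ∪ {b | ¬ sortedTuple b i ≤ ti} ∪ {b | ¬ sortedTuple b ℓ ≤ tl} := by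
    intro b hb
    by_contra hmem
    simp only [Set.mem_union, Set.mem_setOf_eq, not_or, not_not] at hmem
    obtain ⟨⟨hbox, hsi⟩, hsl⟩ := hmem
    apply hb
    simp only [hS, Set.mem_setOf_eq]
    have hsum := sum_pointwise_bound hbox hil hsi hsl hti0 htl0
    have hA : ti ≤ 6 * (iR + 1) / (5 * (k:ℝ)) := min_le_left _ _
    have hB : tl ≤ 6 * (lR + 1) / (5 * (k:ℝ)) := min_le_left _ _
    have hiR0 : (0:ℝ) ≤ iR := by positivity
    have hlR0 : (0:ℝ) ≤ lR := by positivity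
    have step1 : iR * (ti * tl)
        ≤ iR * (6 * (iR + 1) / (5 * (k:ℝ)) * (6 * (lR + 1) / (5 * (k:ℝ)))) := by
      apply mul_le_mul_of_nonneg_left _ hiR0
      exact mul_le_mul hA hB htl0 (by positivity)
    have step2 : iR * (6 * (iR + 1) / (5 * (k:ℝ)) * (6 * (lR + 1) / (5 * (k:ℝ))))
        ≤ 3 * (iR + 1) ^ 2 * (lR + 1) / (2 * (k:ℝ) ^ 2) := by
      have heq : iR * (6 * (iR + 1) / (5 * (k:ℝ)) * (6 * (lR + 1) / (5 * (k:ℝ))))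
          = 36 * iR * (iR + 1) * (lR + 1) / (25 * (k:ℝ) ^ 2) := by
        field_simp; ring
      rw [heq, div_le_div_iff₀ (by positivity) (by positivity)]
      nlinarith [mul_nonneg (mul_nonneg (mul_nonneg hiR0 (by positivity : (0:ℝ) ≤ iR + 1))
        (by positivity : (0:ℝ) ≤ lR + 1)) (by positivity : (0:ℝ) ≤ (k:ℝ)^2),
        mul_nonneg (mul_nonneg (by positivity : (0:ℝ) ≤ (iR+1)^2)
        (by positivity : (0:ℝ) ≤ lR + 1)) (by positivity : (0:ℝ) ≤ (k:ℝ)^2)]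
    calc ∑ ι ∈ Finset.univ.filter (fun ι => ι < i),
        (sortedTuple b i - sortedTuple b ι) * (sortedTuple b ℓ - sortedTuple b ι)
        ≤ iR * (ti * tl) := hsum
      _ ≤ _ := le_trans step1 step2
  -- probability bounds of the bad events
  have hbadi := bad_measure hk0 i
  have hbadl := bad_measure hk0 ℓ
  -- real inequality
  have hsqrt : (0:ℝ) < Real.sqrt k := Real.sqrt_pos.mpr hkR
  have hk34 : (0:ℝ) < (k:ℝ) ^ ((3:ℝ)/4) := Real.rpow_pos_of_pos hkR _
  have hi1 : (k:ℝ) ^ ((3:ℝ)/4) ≤ iR + 1 := hik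
  have hl1 : (k:ℝ) ^ ((3:ℝ)/4) ≤ lR + 1 := by
    refine le_trans hi1 ?_
    have h' : (i:ℕ) ≤ (ℓ:ℕ) := le_of_lt hil
    have h'' : iR ≤ lR := by rw [hiR, hlR]; exact_mod_cast h'
    linarith
  have hsqrt_le : Real.sqrt k ≤ (k:ℝ) ^ ((3:ℝ)/4) := by
    rw [Real.sqrt_eq_rpow]
    exact Real.rpow_le_rpow_of_exponent_le hk1 (by norm_num)
  have hreal : 30 / (iR + 1) + 30 / (lR + 1) ≤ 64 / Real.sqrt k := by
    have h1 : 30 / (iR + 1) ≤ 30 / Real.sqrt k := by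
      apply div_le_div_of_nonneg_left (by norm_num) hsqrt
      exact le_trans hsqrt_le hi1
    have h2 : 30 / (lR + 1) ≤ 30 / Real.sqrt k := by
      apply div_le_div_of_nonneg_left (by norm_num) hsqrt
      exact le_trans hsqrt_le hl1
    have h3 : 30 / Real.sqrt k + 30 / Real.sqrt k ≤ 64 / Real.sqrt k := by
      rw [← add_div, div_le_div_iff₀ hsqrt hsqrt]
      nlinarith
    linarith
  -- measure of complement
  have hcompl : μ Sᶜ ≤ ENNReal.ofReal (64 / Real.sqrt k) := by
    calc μ Sᶜ ≤ μ ({b | ¬ ∀ j, b j ∈ Set.Icc (0:ℝ) 1}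
          ∪ {b | ¬ sortedTuple b i ≤ ti} ∪ {b | ¬ sortedTuple b ℓ ≤ tl}) := measure_mono hsub
      _ ≤ μ ({b | ¬ ∀ j, b j ∈ Set.Icc (0:ℝ) 1} ∪ {b | ¬ sortedTuple b i ≤ ti})
            + μ {b | ¬ sortedTuple b ℓ ≤ tl} := measure_union_le _ _
      _ ≤ μ {b | ¬ ∀ j, b j ∈ Set.Icc (0:ℝ) 1} + μ {b | ¬ sortedTuple b i ≤ ti}
            + μ {b | ¬ sortedTuple b ℓ ≤ tl} := by
          gcongr
          exact measure_union_le _ _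
      _ ≤ 0 + ENNReal.ofReal (30 / (iR + 1)) + ENNReal.ofReal (30 / (lR + 1)) := by
          exact add_le_add (add_le_add (le_of_eq box_ae) hbadi) hbadl
      _ = ENNReal.ofReal (30 / (iR + 1) + 30 / (lR + 1)) := by
          rw [zero_add, ← ENNReal.ofReal_add (by positivity) (by positivity)]
      _ ≤ ENNReal.ofReal (64 / Real.sqrt k) := ENNReal.ofReal_le_ofReal hreal
  have h1 : (1:ENNReal) ≤ μ S + μ Sᶜ := by
    have h2 : μ (S ∪ Sᶜ) ≤ μ S + μ Sᶜ := measure_union_le _ _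
    rwa [Set.union_compl_self, measure_univ] at h2
  calc ENNReal.ofReal (1 - 64 / Real.sqrt k)
      = 1 - ENNReal.ofReal (64 / Real.sqrt k) := by
        rw [ENNReal.ofReal_sub _ (by positivity), ENNReal.ofReal_one]
    _ ≤ 1 - μ Sᶜ := tsub_le_tsub_left hcompl 1
    _ ≤ μ S := by rw [tsub_le_iff_right]; exact h1
end
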